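/- Let σ > 0 and let (x,y) : [0,∞) → ℝ_{>0} × ℝ be a differentiable solution of x' = 2y², y' = σ x^{−1/2}. Then there exists t₁ ≥ 0 such that y(t) > 0 for all t > t₁. -/

import Mathlib

/-!
Along a solution, `y³ - 3σ√x` is conserved, since `(y³)' = 3σ y² / √x = 3σ (√x)'`.
As `y' = σ / √x > 0`, `y` is strictly increasing, so it suffices that `y` becomes positive
once. If `y ≤ 0` throughout, the conservation law bounds `√x` by some `B`, hence `y' ≥ σ / B`
and `y` grows at least linearly, which is absurd.
-/

open Set

section IciDeriv

variable {f f' : ℝ → ℝ} {a : ℝ}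

lemma hasDerivWithinAt_interior_Ici (hf : ∀ t ∈ Ici a, HasDerivWithinAt f (f' t) (Ici a) t) :
    ∀ t ∈ interior (Ici a), HasDerivWithinAt f (f' t) (interior (Ici a)) t := by
  rw [interior_Ici]
  exact fun t ht => (hf t (Ioi_subset_Ici_self ht)).mono Ioi_subset_Ici_self

lemma strictMonoOn_Ici_of_hasDerivWithinAt_pos
    (hf : ∀ t ∈ Ici a, HasDerivWithinAt f (f' t) (Ici a) t) (hf' : ∀ t ∈ Ici a, 0 < f' t) :
    StrictMonoOn f (Ici a) :=
  strictMonoOn_of_hasDerivWithinAt_pos (convex_Ici a)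
    (fun t ht => (hf t ht).continuousWithinAt) (hasDerivWithinAt_interior_Ici hf)
    (fun t ht => hf' t (interior_subset ht))

lemma add_mul_sub_le_of_hasDerivWithinAt_Ici {c : ℝ}
    (hf : ∀ t ∈ Ici a, HasDerivWithinAt f (f' t) (Ici a) t) (hc : ∀ t ∈ Ici a, c ≤ f' t) :
    ∀ t ∈ Ici a, f a + c * (t - a) ≤ f t := by
  have hg : ∀ t ∈ Ici a, HasDerivWithinAt (fun s => f s - c * s) (f' t - c) (Ici a) t :=
    fun t ht => (hf t ht).sub (by simpa using (hasDerivWithinAt_id t (Ici a)).const_mul c)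
  have hmono : MonotoneOn (fun s => f s - c * s) (Ici a) :=
    monotoneOn_of_hasDerivWithinAt_nonneg (convex_Ici a)
      (fun t ht => (hg t ht).continuousWithinAt) (hasDerivWithinAt_interior_Ici hg)
      (fun t ht => sub_nonneg.2 (hc t (interior_subset ht)))
  intro t ht
  linarith [hmono self_mem_Ici ht ht]

lemma eq_of_hasDerivWithinAt_Ici_zero (hf : ∀ t ∈ Ici a, HasDerivWithinAt f 0 (Ici a) t) :
    ∀ t ∈ Ici a, f t = f a := fun t ht =>
  constant_of_has_deriv_right_zero
    (fun s hs => (hf s hs.1).continuousWithinAt.mono Icc_subset_Ici_self)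
    (fun s hs => (hf s hs.1).mono (Ici_subset_Ici.2 hs.1)) t ⟨ht, le_rfl⟩

end IciDeriv

section System

variable {σ a : ℝ} {x y : ℝ → ℝ}

lemma cube_sub_mul_sqrt_eq (hpos : ∀ t ∈ Ici a, 0 < x t)
    (hx : ∀ t ∈ Ici a, HasDerivWithinAt x (2 * y t ^ 2) (Ici a) t)
    (hy : ∀ t ∈ Ici a, HasDerivWithinAt y (σ / √(x t)) (Ici a) t) :
    ∀ t ∈ Ici a, y t ^ 3 - 3 * σ * √(x t) = y a ^ 3 - 3 * σ * √(x a) := by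
  refine eq_of_hasDerivWithinAt_Ici_zero fun t ht => ?_
  have hsqrt : √(x t) ≠ 0 := (Real.sqrt_pos.2 (hpos t ht)).ne'
  refine (((hy t ht).fun_pow 3).sub
    (((hx t ht).sqrt (hpos t ht).ne').const_mul (3 * σ))).congr_deriv ?_
  field_simp
  ring

lemma exists_pos_of_system (hσ : 0 < σ) (hpos : ∀ t ∈ Ici a, 0 < x t)
    (hx : ∀ t ∈ Ici a, HasDerivWithinAt x (2 * y t ^ 2) (Ici a) t)
    (hy : ∀ t ∈ Ici a, HasDerivWithinAt y (σ / √(x t)) (Ici a) t) :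
    ∃ T ∈ Ici a, 0 < y T := by
  by_contra! hneg
  set B := √(x a) - y a ^ 3 / (3 * σ)
  have hB : 0 < B := by
    have : y a ^ 3 / (3 * σ) ≤ 0 := div_nonpos_of_nonpos_of_nonneg
      (Odd.pow_nonpos (by decide) (hneg a self_mem_Ici)) (by positivity)
    linarith [Real.sqrt_pos.2 (hpos a self_mem_Ici)]
  have hsqrt_le : ∀ t ∈ Ici a, √(x t) ≤ B := fun t ht => by
    have hcons := cube_sub_mul_sqrt_eq hpos hx hy t ht
    have : y t ^ 3 ≤ 0 := Odd.pow_nonpos (by decide) (hneg t ht)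
    rw [le_sub_iff_add_le, ← le_sub_iff_add_le', div_le_iff₀ (by positivity)]
    linarith
  have hlin := add_mul_sub_le_of_hasDerivWithinAt_Ici hy (c := σ / B) fun t ht =>
    div_le_div_of_nonneg_left hσ.le (Real.sqrt_pos.2 (hpos t ht)) (hsqrt_le t ht)
  set T := a + B / σ * (1 - y a)
  have hT : T ∈ Ici a := mem_Ici.2 <|
    le_add_of_nonneg_right (mul_nonneg (by positivity) (by linarith [hneg a self_mem_Ici]))
  have hgrowth : σ / B * (T - a) = 1 - y a := by
    simp only [T]
    field_simp
    ring
  linarith [hlin T hT, hneg T hT]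

end System

theorem stmt15 (σ : ℝ) (hσ : 0 < σ) (x y : ℝ → ℝ)
    (hpos : ∀ t ∈ Set.Ici (0 : ℝ), 0 < x t)
    (hx : ∀ t ∈ Set.Ici (0 : ℝ),
      HasDerivWithinAt x (2 * (y t) ^ 2) (Set.Ici (0 : ℝ)) t)
    (hy : ∀ t ∈ Set.Ici (0 : ℝ),
      HasDerivWithinAt y (σ / Real.sqrt (x t)) (Set.Ici (0 : ℝ)) t) :
    ∃ t₁ ≥ (0 : ℝ), ∀ t > t₁, 0 < y t := by
  have hmono : StrictMonoOn y (Ici 0) := strictMonoOn_Ici_of_hasDerivWithinAt_pos hy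
    fun t ht => div_pos hσ (Real.sqrt_pos.2 (hpos t ht))
  obtain ⟨T, hT, hyT⟩ := exists_pos_of_system hσ hpos hx hy
  exact ⟨T, hT, fun t ht => hyT.trans (hmono hT (mem_Ici.2 (hT.trans ht.le)) ht)⟩
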